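/- PAC bound for a single classifier with two-level sampling: let L_1,...,L_m be i.i.d. [0,1]-valued random variables with mean L_D and variance (1/n)·V₁ + V₂ (arising from averaging n conditionally-i.i.d. losses per rater). Then for any δ ∈ (0,1], with probability at least 1−δ, |L_D − (1/m)∑ L_i| ≤ (1/(3m))·[g + √(g² + 18 g m ((1/n)V₁ + V₂))], where g = ln(2/δ). -/

import Mathlib

/-!
Bernstein's inequality. Comparing the exponential series termwise, `|x| ≤ 1` and `0 ≤ t` give
`exp (t * x) ≤ 1 + t * x + x ^ 2 * (exp t - 1 - t)`, so a centred variable bounded by `1` with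
second moment `σ²` has `mgf ≤ exp (σ² * (exp t - 1 - t))`. For a sum of independent such variables
with total variance `V`, Chernoff's bound at `t = s / (V + s / 3)`, together with
`(exp t - 1 - t) * (1 - t / 3) ≤ t ^ 2 / 2` (from `2 * 3 ^ k ≤ (k + 2)!`), gives the tail
`exp (-(s ^ 2 / (2 * (V + s / 3))))`. The deviation in the statement is `s / m`, where `s` solves
`s ^ 2 = 2 * g * (V + s / 3)` for `V = m * Var`, so each of the two tails has probability
`exp (-g) = δ / 2`.
-/

open MeasureTheory ProbabilityTheory Real
open scoped Nat

lemma hasSum_exp_sub_one_sub (x : ℝ) :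
    HasSum (fun k : ℕ => x ^ (k + 2) / (k + 2)!) (exp x - 1 - x) := by
  have h := (hasSum_nat_add_iff' 2).2 (NormedSpace.expSeries_div_hasSum_exp (𝔸 := ℝ) x)
  rw [← Real.exp_eq_exp_ℝ] at h
  simpa [Finset.sum_range_succ, sub_sub] using h

lemma exp_mul_le_one_add_mul_add_sq_mul {t x : ℝ} (ht : 0 ≤ t) (hx : |x| ≤ 1) :
    exp (t * x) ≤ 1 + t * x + x ^ 2 * (exp t - 1 - t) := by
  have hpow (k : ℕ) : x ^ (k + 2) ≤ x ^ 2 := calc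
    x ^ (k + 2) ≤ |x| ^ (k + 2) := abs_pow x (k + 2) ▸ le_abs_self _
    _ ≤ |x| ^ 2 := pow_le_pow_of_le_one (abs_nonneg x) hx (by omega)
    _ = x ^ 2 := sq_abs x
  have hle : exp (t * x) - 1 - t * x ≤ x ^ 2 * (exp t - 1 - t) := by
    refine hasSum_le (fun k => ?_) (hasSum_exp_sub_one_sub (t * x))
      ((hasSum_exp_sub_one_sub t).mul_left (x ^ 2))
    rw [mul_pow, ← mul_div_assoc, mul_comm (x ^ 2)]
    gcongr _ * ?_ / _
    exact hpow k
  linarith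

lemma two_mul_three_pow_le_factorial (k : ℕ) : 2 * 3 ^ k ≤ (k + 2)! := by
  induction k with
  | zero => decide
  | succ k ih =>
    rw [show k + 1 + 2 = (k + 2) + 1 by ring, Nat.factorial_succ, pow_succ]
    nlinarith

lemma exp_sub_one_sub_mul_le_sq {t : ℝ} (ht0 : 0 ≤ t) (ht3 : t ≤ 3) :
    (exp t - 1 - t) * (2 * (1 - t / 3)) ≤ t ^ 2 := by
  rcases ht3.lt_or_eq with ht3 | rfl
  · have hgeo : HasSum (fun k : ℕ => t ^ 2 / 2 * (t / 3) ^ k) (t ^ 2 / 2 * (1 - t / 3)⁻¹) :=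
      (hasSum_geometric_of_lt_one (by positivity) (by linarith)).mul_left _
    have hle : exp t - 1 - t ≤ t ^ 2 / 2 * (1 - t / 3)⁻¹ := by
      refine hasSum_le (fun k => ?_) (hasSum_exp_sub_one_sub t) hgeo
      rw [show t ^ 2 / 2 * (t / 3) ^ k = t ^ (k + 2) / (2 * 3 ^ k) by rw [div_pow]; ring]
      gcongr
      exact_mod_cast two_mul_three_pow_le_factorial k
    have : 0 < 1 - t / 3 := by linarith
    calc (exp t - 1 - t) * (2 * (1 - t / 3))
        ≤ t ^ 2 / 2 * (1 - t / 3)⁻¹ * (2 * (1 - t / 3)) := by gcongr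
      _ = t ^ 2 := by field_simp
  · norm_num

-- The positive root `s` of `s ^ 2 = 2 * G * (V + s / 3)`: the deviation at which Bernstein's
-- tail bound `exp (-(s ^ 2 / (2 * (V + s / 3))))` equals `exp (-G)`.
noncomputable def bernsteinRadius (G V : ℝ) : ℝ := (G + √(G ^ 2 + 18 * G * V)) / 3

lemma bernsteinRadius_pos {G V : ℝ} (hG : 0 < G) : 0 < bernsteinRadius G V := by
  unfold bernsteinRadius; positivity

lemma bernsteinRadius_sq {G V : ℝ} (hG : 0 ≤ G) (hV : 0 ≤ V) :
    bernsteinRadius G V ^ 2 = 2 * G * (V + bernsteinRadius G V / 3) := by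
  have hsqrt := sq_sqrt (show 0 ≤ G ^ 2 + 18 * G * V by positivity)
  unfold bernsteinRadius
  linear_combination hsqrt / 9

section Bernstein

variable {Ω : Type*} [MeasurableSpace Ω] {μ : Measure Ω} [IsProbabilityMeasure μ]

lemma integrable_of_abs_le_one {X : Ω → ℝ} (hX : Measurable X) (hb : ∀ ω, |X ω| ≤ 1) :
    Integrable X μ :=
  .of_bound hX.aestronglyMeasurable 1 (.of_forall hb)

lemma integrable_exp_mul_of_abs_le_one {X : Ω → ℝ} (hX : Measurable X) (hb : ∀ ω, |X ω| ≤ 1)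
    {t : ℝ} (ht : 0 ≤ t) : Integrable (fun ω => exp (t * X ω)) μ := by
  refine .of_bound (hX.const_mul t).exp.aestronglyMeasurable (exp t) (.of_forall fun ω => ?_)
  rw [norm_of_nonneg (exp_pos _).le, exp_le_exp]
  nlinarith [abs_le.1 (hb ω)]

lemma mgf_le_exp_integral_sq_mul {X : Ω → ℝ} (hX : Measurable X) (hb : ∀ ω, |X ω| ≤ 1)
    (hmean : μ[X] = 0) {t : ℝ} (ht : 0 ≤ t) :
    mgf X μ t ≤ exp ((∫ ω, X ω ^ 2 ∂μ) * (exp t - 1 - t)) := by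
  have hX2 : Integrable (fun ω => X ω ^ 2) μ :=
    .of_bound (hX.pow_const 2).aestronglyMeasurable 1 (.of_forall fun ω => by
      rw [norm_pow, norm_eq_abs]; exact pow_le_one₀ (abs_nonneg _) (hb ω))
  have hlin : Integrable (fun ω => 1 + t * X ω) μ :=
    (integrable_const 1).add ((integrable_of_abs_le_one hX hb).const_mul t)
  calc mgf X μ t
      ≤ ∫ ω, (1 + t * X ω + X ω ^ 2 * (exp t - 1 - t)) ∂μ :=
        integral_mono (integrable_exp_mul_of_abs_le_one hX hb ht)
          (hlin.add (hX2.mul_const _))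
          fun ω => exp_mul_le_one_add_mul_add_sq_mul ht (hb ω)
    _ = 1 + (∫ ω, X ω ^ 2 ∂μ) * (exp t - 1 - t) := by
        rw [integral_add hlin (hX2.mul_const _),
          integral_add (integrable_const 1) ((integrable_of_abs_le_one hX hb).const_mul t),
          integral_const_mul, integral_mul_const, hmean]
        simp
    _ ≤ exp ((∫ ω, X ω ^ 2 ∂μ) * (exp t - 1 - t)) := by
        linarith [add_one_le_exp ((∫ ω, X ω ^ 2 ∂μ) * (exp t - 1 - t))]

lemma ofReal_one_sub_le_measure {s : Set Ω} {δ : ℝ} (hδ : 0 ≤ δ) (h : μ sᶜ ≤ ENNReal.ofReal δ) :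
    ENNReal.ofReal (1 - δ) ≤ μ s := by
  have hcover : 1 ≤ μ s + μ sᶜ := by
    rw [← measure_univ (μ := μ), ← Set.union_compl_self s]; exact measure_union_le _ _
  calc ENNReal.ofReal (1 - δ) ≤ 1 - ENNReal.ofReal δ := by
        rw [ENNReal.ofReal_sub 1 hδ, ENNReal.ofReal_one]
    _ ≤ 1 - μ sᶜ := tsub_le_tsub_left h 1
    _ ≤ μ s := tsub_le_iff_right.2 hcover

lemma abs_sub_integral_le_one {Y : Ω → ℝ} (hY : Measurable Y)
    (h01 : ∀ ω, Y ω ∈ Set.Icc (0 : ℝ) 1) (ω : Ω) : |Y ω - μ[Y]| ≤ 1 := by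
  have hint : Integrable Y μ :=
    .of_bound hY.aestronglyMeasurable 1 (.of_forall fun ω => by
      rw [norm_of_nonneg (h01 ω).1]; exact (h01 ω).2)
  have hmean0 : 0 ≤ μ[Y] := integral_nonneg fun ω => (h01 ω).1
  have hmean1 : μ[Y] ≤ 1 := calc
    μ[Y] ≤ ∫ _, (1 : ℝ) ∂μ := integral_mono hint (integrable_const 1) fun ω => (h01 ω).2
    _ = 1 := by simp
  exact abs_le.2 ⟨by linarith [(h01 ω).1], by linarith [(h01 ω).2]⟩

section Sum

variable {ι : Type*} [Fintype ι] {X : ι → Ω → ℝ}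

lemma measure_sum_ge_le_exp_neg_mul_add (hindep : iIndepFun X μ) (hmeas : ∀ i, Measurable (X i))
    (hb : ∀ i ω, |X i ω| ≤ 1) (hmean : ∀ i, μ[X i] = 0) (s : ℝ) {t : ℝ} (ht : 0 ≤ t) :
    μ.real {ω | s ≤ ∑ i, X i ω} ≤
      exp (-t * s + (∑ i, ∫ ω, X i ω ^ 2 ∂μ) * (exp t - 1 - t)) := by
  have hchernoff := measure_ge_le_exp_mul_mgf (μ := μ) (X := ∑ i, X i) s ht
    (hindep.integrable_exp_mul_sum hmeas fun i _ =>
      integrable_exp_mul_of_abs_le_one (hmeas i) (hb i) ht)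
  simp only [Finset.sum_apply] at hchernoff
  have hmgf : mgf (∑ i, X i) μ t ≤ exp ((∑ i, ∫ ω, X i ω ^ 2 ∂μ) * (exp t - 1 - t)) := by
    rw [hindep.mgf_sum hmeas, Finset.sum_mul, exp_sum]
    exact Finset.prod_le_prod (fun i _ => mgf_nonneg)
      fun i _ => mgf_le_exp_integral_sq_mul (hmeas i) (hb i) (hmean i) ht
  calc μ.real {ω | s ≤ ∑ i, X i ω} ≤ exp (-t * s) * mgf (∑ i, X i) μ t := hchernoff
    _ ≤ exp (-t * s) * exp ((∑ i, ∫ ω, X i ω ^ 2 ∂μ) * (exp t - 1 - t)) := by gcongr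
    _ = _ := (exp_add _ _).symm

theorem measure_sum_ge_le_bernstein (hindep : iIndepFun X μ) (hmeas : ∀ i, Measurable (X i))
    (hb : ∀ i ω, |X i ω| ≤ 1) (hmean : ∀ i, μ[X i] = 0) {s : ℝ} (hs : 0 < s) :
    μ {ω | s ≤ ∑ i, X i ω} ≤
      ENNReal.ofReal (exp (-(s ^ 2 / (2 * (∑ i, ∫ ω, X i ω ^ 2 ∂μ + s / 3))))) := by
  set V := ∑ i, ∫ ω, X i ω ^ 2 ∂μ
  have hV : 0 ≤ V := Finset.sum_nonneg fun i _ => integral_nonneg fun ω => sq_nonneg _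
  have hD : 0 < V + s / 3 := by positivity
  set t := s / (V + s / 3)
  have ht : 0 ≤ t := by positivity
  have ht3 : t ≤ 3 := by
    rw [div_le_iff₀ hD]; linarith
  -- Bernstein's choice of `t`: it makes `V = (V + s / 3) * (1 - t / 3)`.
  have hψ : V * (exp t - 1 - t) ≤ s * t / 2 := by
    have hV_eq : V = (V + s / 3) * (1 - t / 3) := by
      simp only [t]; field_simp; ring
    have := exp_sub_one_sub_mul_le_sq ht ht3
    rw [hV_eq]
    have : s * t / 2 = (V + s / 3) * t ^ 2 / 2 := by simp only [t]; field_simp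
    nlinarith
  rw [← ofReal_measureReal]
  gcongr
  calc μ.real {ω | s ≤ ∑ i, X i ω} ≤ exp (-t * s + V * (exp t - 1 - t)) :=
        measure_sum_ge_le_exp_neg_mul_add hindep hmeas hb hmean s ht
    _ ≤ _ := by
        gcongr
        have : s ^ 2 / (2 * (V + s / 3)) = s * t / 2 := by simp only [t]; field_simp
        linarith

theorem measure_bernsteinRadius_le_abs_sum_le (hindep : iIndepFun X μ)
    (hmeas : ∀ i, Measurable (X i)) (hb : ∀ i ω, |X i ω| ≤ 1) (hmean : ∀ i, μ[X i] = 0)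
    {G : ℝ} (hG : 0 < G) :
    μ {ω | bernsteinRadius G (∑ i, ∫ ω, X i ω ^ 2 ∂μ) ≤ |∑ i, X i ω|} ≤
      2 * ENNReal.ofReal (exp (-G)) := by
  set V := ∑ i, ∫ ω, X i ω ^ 2 ∂μ
  set s := bernsteinRadius G V
  have hV : 0 ≤ V := Finset.sum_nonneg fun i _ => integral_nonneg fun ω => sq_nonneg _
  have hs : 0 < s := bernsteinRadius_pos hG
  have hexponent : s ^ 2 / (2 * (V + s / 3)) = G := by
    rw [show s ^ 2 = 2 * G * (V + s / 3) from bernsteinRadius_sq hG.le hV]; field_simp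
  have hupper := measure_sum_ge_le_bernstein hindep hmeas hb hmean hs
  have hlower := measure_sum_ge_le_bernstein (X := fun i ω => -X i ω)
    (hindep.comp (fun _ => Neg.neg) fun _ => measurable_neg) (fun i => (hmeas i).neg)
    (fun i ω => (abs_neg (X i ω)).symm ▸ hb i ω)
    (fun i => by rw [integral_neg, hmean i, neg_zero]) hs
  simp only [neg_sq, Finset.sum_neg_distrib] at hlower
  rw [hexponent] at hupper hlower
  calc μ {ω | s ≤ |∑ i, X i ω|}
      ≤ μ ({ω | s ≤ ∑ i, X i ω} ∪ {ω | s ≤ -∑ i, X i ω}) :=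
        measure_mono fun ω (hω : s ≤ _) => le_abs.1 hω
    _ ≤ μ {ω | s ≤ ∑ i, X i ω} + μ {ω | s ≤ -∑ i, X i ω} := measure_union_le _ _
    _ ≤ 2 * ENNReal.ofReal (exp (-G)) := by rw [two_mul]; gcongr

end Sum

theorem measure_pi_bernsteinRadius_le_abs_sum_sub_le {Y : Ω → ℝ}
    (hY : Measurable Y) (hb : ∀ ω, |Y ω - μ[Y]| ≤ 1) (m : ℕ) {G : ℝ} (hG : 0 < G) :
    (Measure.pi fun _ : Fin m => μ)
        {ω | bernsteinRadius G (m * Var[Y; μ]) ≤ |∑ i, (Y (ω i) - μ[Y])|} ≤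
      2 * ENNReal.ofReal (exp (-G)) := by
  have hint : Integrable Y μ :=
    ((integrable_of_abs_le_one (hY.sub_const μ[Y]) hb).add (integrable_const μ[Y])).congr
      (.of_forall fun ω => sub_add_cancel (Y ω) μ[Y])
  have hcentred := (hY.sub_const μ[Y]).aestronglyMeasurable (μ := μ)
  have hmean (i : Fin m) : ∫ ω, (Y (ω i) - μ[Y]) ∂(Measure.pi fun _ => μ) = 0 := by
    rw [integral_comp_eval (μ := fun _ => μ) (f := fun x => Y x - μ[Y]) hcentred,
      integral_sub hint (integrable_const _)]
    simp
  have hvar (i : Fin m) : ∫ ω, (Y (ω i) - μ[Y]) ^ 2 ∂(Measure.pi fun _ => μ) = Var[Y; μ] := by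
    rw [integral_comp_eval (μ := fun _ => μ) (f := fun x => (Y x - μ[Y]) ^ 2)
      (hcentred.pow 2), variance_eq_integral hY.aemeasurable]
  have := measure_bernsteinRadius_le_abs_sum_le (μ := Measure.pi fun _ => μ)
    (X := fun i ω => Y (ω i) - μ[Y]) (iIndepFun_pi fun _ => (hY.sub_const _).aemeasurable)
    (fun i => (hY.sub_const _).comp (measurable_pi_apply i)) (fun i ω => hb (ω i)) hmean hG
  simpa only [hvar, Finset.sum_const, Finset.card_univ, Fintype.card_fin, nsmul_eq_mul] using this

end Bernstein

theorem stmt4_general {Ω : Type*} [MeasurableSpace Ω] (μ : Measure Ω) [IsProbabilityMeasure μ]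
    (m n : ℕ) (hm : 0 < m)
    (f : Ω → ℝ) (hf : Measurable f) (hbdd : ∀ ω, f ω ∈ Set.Icc (0:ℝ) 1)
    (LD V₁ V₂ : ℝ)
    (hmean : ∫ ω, f ω ∂μ = LD)
    (hvar : variance f μ = (1 / n) * V₁ + V₂)
    (δ : ℝ) (hδ : δ ∈ Set.Ioc (0:ℝ) 1) :
    ENNReal.ofReal (1 - δ) ≤
      (Measure.pi fun _ : Fin m => μ)
        {ω | |LD - (1 / m : ℝ) * ∑ i, f (ω i)| ≤
          (1 / (3 * m)) * (Real.log (2 / δ) +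
            Real.sqrt ((Real.log (2 / δ)) ^ 2 +
              18 * Real.log (2 / δ) * m * ((1 / n) * V₁ + V₂)))} := by
  obtain ⟨hδ0, hδ1⟩ := hδ
  set G := log (2 / δ)
  have hG : 0 < G := log_pos (by rw [lt_div_iff₀ hδ0]; linarith)
  have hbad := measure_pi_bernsteinRadius_le_abs_sum_sub_le hf
    (abs_sub_integral_le_one (μ := μ) hf hbdd) m hG
  rw [hmean, hvar] at hbad
  refine ofReal_one_sub_le_measure hδ0.le ((measure_mono fun ω hω => ?_).trans (hbad.trans_eq ?_))
  · have hm' : (0 : ℝ) < m := by exact_mod_cast hm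
    have hsum : ∑ i, (f (ω i) - LD) = -(m * (LD - 1 / m * ∑ i, f (ω i))) := by
      rw [Finset.sum_sub_distrib, Finset.sum_const, Finset.card_univ, Fintype.card_fin,
        nsmul_eq_mul]
      field_simp
      ring
    have hradius : bernsteinRadius G (m * ((1 / n) * V₁ + V₂)) =
        m * (1 / (3 * m) * (G + √(G ^ 2 + 18 * G * m * ((1 / n) * V₁ + V₂)))) := by
      unfold bernsteinRadius
      field_simp
    simp only [Set.mem_compl_iff, Set.mem_ofPred_eq, not_le] at hω ⊢
    rw [hsum, abs_neg, abs_mul, Nat.abs_cast, hradius]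
    exact (mul_lt_mul_of_pos_left hω hm').le
  · rw [exp_neg, exp_log (by positivity), ← ENNReal.ofReal_ofNat 2,
      ← ENNReal.ofReal_mul (by norm_num)]
    congr 1
    field_simp

theorem stmt4 {Ω : Type*} [MeasurableSpace Ω] (μ : Measure Ω) [IsProbabilityMeasure μ]
    (m n : ℕ) (hm : 0 < m) (hn : 0 < n)
    (f : Ω → ℝ) (hf : Measurable f) (hbdd : ∀ ω, f ω ∈ Set.Icc (0:ℝ) 1)
    (LD V₁ V₂ : ℝ) (hV₁ : 0 ≤ V₁) (hV₂ : 0 ≤ V₂)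
    (hmean : ∫ ω, f ω ∂μ = LD)
    (hvar : variance f μ = (1 / n) * V₁ + V₂)
    (δ : ℝ) (hδ : δ ∈ Set.Ioc (0:ℝ) 1) :
    ENNReal.ofReal (1 - δ) ≤
      (Measure.pi fun _ : Fin m => μ)
        {ω | |LD - (1 / m : ℝ) * ∑ i, f (ω i)| ≤
          (1 / (3 * m)) * (Real.log (2 / δ) +
            Real.sqrt ((Real.log (2 / δ)) ^ 2 +
              18 * Real.log (2 / δ) * m * ((1 / n) * V₁ + V₂)))} :=
  stmt4_general μ m n hm f hf hbdd LD V₁ V₂ hmean hvar δ hδ
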